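/- arXiv:1403.0460 — 4 statements merged into one kernel-verified Lean document; each statement's English description precedes it below -/
import Mathlib

section
/- Fix integers n ≥ 1, c ≥ 1 and m ∈ {0, …, c}. Let P^n(c)_m = {(A₁, A₂; C₁, …, C_n; e) ∈ P^n(c) : A_{2m} is invertible}. Then the map ζ_m : P^n(c)_m → T(c) × GL(c, ℂ) sending (A₁, A₂; C₁, …, C_n; e) to ((B_m, E_m, e), A_{2m}) is well defined (i.e. for every tuple in P^n(c)_m the triple (B_m, E_m, e) satisfies (T1) and (T2)) and is a bijection onto T(c) × GL(c, ℂ). -/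
open Matrix

abbrev Mat (c : ℕ) := Matrix (Fin c) (Fin c) ℂ

noncomputable def cS (c : ℕ) (m : ℤ) : ℂ :=
  ((Real.cos (Real.pi * (m : ℝ) / ((c : ℝ) + 1)) : ℝ) : ℂ)

noncomputable def sS (c : ℕ) (m : ℤ) : ℂ :=
  ((Real.sin (Real.pi * (m : ℝ) / ((c : ℝ) + 1)) : ℝ) : ℂ)

noncomputable def A1M (c : ℕ) (m : ℤ) (A1 A2 : Mat c) : Mat c :=
  cS c m • A1 - sS c m • A2

noncomputable def A2M (c : ℕ) (m : ℤ) (A1 A2 : Mat c) : Mat c :=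
  sS c m • A1 + cS c m • A2

noncomputable def BM (c : ℕ) (m : ℤ) (A1 A2 : Mat c) : Mat c :=
  (A2M c m A1 A2)⁻¹ * A1M c m A1 A2

noncomputable def DM (n c : ℕ) (m : ℤ) (C : Fin n → Mat c) : Mat c :=
  ∑ q : Fin n, (((n - 1).choose q.val : ℂ) * cS c m ^ (n - 1 - q.val) * sS c m ^ q.val) • C q

noncomputable def EM (n c : ℕ) (m : ℤ) (A1 A2 : Mat c) (C : Fin n → Mat c) : Mat c :=
  DM n c m C * A2M c m A1 A2

/-- Condition (P1). -/
def CondP1 (n c : ℕ) (A1 A2 : Mat c) (C : Fin n → Mat c) : Prop :=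
  (∀ h : n = 1, A1 * C ⟨0, by omega⟩ * A2 = A2 * C ⟨0, by omega⟩ * A1) ∧
  ∀ q : ℕ, ∀ hq : q + 1 < n,
    A1 * C ⟨q, by omega⟩ = A2 * C ⟨q + 1, hq⟩ ∧
    C ⟨q, by omega⟩ * A1 = C ⟨q + 1, hq⟩ * A2

/-- Condition (P2). -/
def CondP2 (c : ℕ) (A1 A2 : Mat c) : Prop :=
  ∃ ν : ℂ × ℂ, ν ≠ 0 ∧ (ν.1 • A1 + ν.2 • A2).det ≠ 0

/-- Condition (P3), with `C1`, `Cn` the first and last of the `C` matrices. -/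
def CondP3 (n c : ℕ) (A1 A2 C1 Cn : Mat c) (e : Fin c → ℂ) : Prop :=
  ∀ l1 l2 m1 m2 : ℂ, (l1, l2) ≠ 0 → l1 ^ n * m1 + l2 ^ n * m2 = 0 →
    ∀ v : Fin c → ℂ,
      (l2 • A1 + l1 • A2).mulVec v = 0 →
      (C1 * A2 + m1 • 1).mulVec v = 0 →
      (Cn * A1 + ((-1 : ℂ) ^ (n - 1) * m2) • 1).mulVec v = 0 →
      e ⬝ᵥ v = 0 → v = 0

/-- Membership in `P^n(c)`: conditions (P1), (P2), (P3). -/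
def CondP (n c : ℕ) (hn : 0 < n) (A1 A2 : Mat c) (C : Fin n → Mat c) (e : Fin c → ℂ) : Prop :=
  CondP1 n c A1 A2 C ∧ CondP2 c A1 A2 ∧
    CondP3 n c A1 A2 (C ⟨0, hn⟩) (C ⟨n - 1, by omega⟩) e

/-- Condition (T2). -/
def CondT2 (c : ℕ) (b1 b2 : Mat c) (e : Fin c → ℂ) : Prop :=
  ∀ z w : ℂ, ∀ v : Fin c → ℂ,
    (b1 + z • 1).mulVec v = 0 → (b2 + w • 1).mulVec v = 0 → e ⬝ᵥ v = 0 → v = 0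

/-- ADHM data: conditions (T1) and (T2). -/
def ADHM (c : ℕ) (b1 b2 : Mat c) (e : Fin c → ℂ) : Prop :=
  b1 * b2 = b2 * b1 ∧ CondT2 c b1 b2 e

/-!
Write `g = A_{2m}`, `B = B_m`, and let `Q = s_m + c_m B`, `P = c_m - s_m B`; these commute, and
`c_m P + s_m Q = 1`. Inverting the rotation gives `A₁ = g Q` and `A₂ = g P`, so after cancelling
`g` the relations (P1) read `Q C_q = P C_{q+1}` and `(C_q g) Q = (C_{q+1} g) P`. Expanding
`(c_m P + s_m Q)^{n-1}` by the binomial theorem then gives `C_q = Q^q P^{n-1-q} D_m`: the tuple is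
determined by `(B, E, e, g)`, and conversely `C_q = Q^q P^{n-1-q} b₂ g⁻¹` recovers a tuple from any
`((b₁, b₂, e), g)`. On an eigenvector `v` of `B` the matrices `P` and `Q` act by scalars
`λ₂`, `-λ₁` with `c_m λ₂ - s_m λ₁ = 1`, and the same binomial identity then shows that `C₁ A₂` and
`C_n A₁` act on `v` through `E v`; this turns (T2) into (P3) and back.
-/

open Finset

lemma Commute.mul_pow_mul_pow_succ {R : Type*} [Monoid R] {p q : R} (h : Commute p q)
    (i j : ℕ) :
    q * (q ^ i * p ^ (j + 1)) = p * (q ^ (i + 1) * p ^ j) := by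
  rw [← mul_assoc, ← pow_succ', ← mul_assoc, (h.pow_right (i + 1)).eq, mul_assoc,
    ← pow_succ']

section Binomial

variable {𝕜 R M : Type*} [CommRing 𝕜] [Ring R] [Algebra 𝕜 R] [AddCommGroup M] [Module R M]
  [Module 𝕜 M] [IsScalarTower 𝕜 R M] {p q : R}

theorem Commute.smul_add_smul_pow (h : Commute p q) (x y : 𝕜) (N : ℕ) :
    (x • p + y • q) ^ N =
      ∑ r ∈ range (N + 1),
        ((N.choose r : 𝕜) * x ^ (N - r) * y ^ r) • (q ^ r * p ^ (N - r)) := by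
  rw [add_comm, ((h.symm.smul_left y).smul_right x).add_pow]
  refine sum_congr rfl fun r _ => ?_
  rw [smul_pow, smul_pow, smul_mul_smul_comm, ← Nat.cast_comm, ← nsmul_eq_mul,
    ← Nat.cast_smul_eq_nsmul 𝕜, smul_smul]
  ring_nf

theorem Commute.pow_smul_eq_pow_smul_add (h : Commute p q) {N : ℕ} {X : ℕ → M}
    (hX : ∀ i < N, q • X i = p • X (i + 1)) (j : ℕ) {r : ℕ} (hr : r + j ≤ N) :
    q ^ j • X r = p ^ j • X (r + j) := by
  induction j generalizing r with
  | zero => simp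
  | succ j ih =>
    rw [pow_succ, mul_smul, hX r (by omega), ← mul_smul, ← (h.pow_right j).eq, mul_smul,
      ih (r := r + 1) (by omega), ← mul_smul, ← pow_succ', add_right_comm, add_assoc]

theorem Commute.pow_mul_pow_smul_comm (h : Commute p q) {N : ℕ} {X : ℕ → M}
    (hX : ∀ i < N, q • X i = p • X (i + 1)) {k r : ℕ} (hk : k ≤ N) (hr : r ≤ N) :
    (q ^ k * p ^ (N - k)) • X r = (q ^ r * p ^ (N - r)) • X k := by
  wlog hrk : r ≤ k generalizing k r
  · exact (this hr hk (by omega)).symm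
  obtain ⟨d, rfl⟩ := Nat.exists_eq_add_of_le hrk
  calc (q ^ (r + d) * p ^ (N - (r + d))) • X r
      = (q ^ r * p ^ (N - (r + d))) • q ^ d • X r := by
        rw [← mul_smul, pow_add, mul_assoc, mul_assoc, ((h.symm.pow_pow d _).eq)]
    _ = (q ^ r * p ^ (N - r)) • X (r + d) := by
        rw [h.pow_smul_eq_pow_smul_add hX d hk, ← mul_smul, mul_assoc, ← pow_add,
          show N - (r + d) + d = N - r by omega]

theorem Commute.eq_pow_mul_pow_smul_sum (h : Commute p q) {x y : 𝕜}
    (hxy : x • p + y • q = 1) {N : ℕ} {X : ℕ → M} (hX : ∀ i < N, q • X i = p • X (i + 1))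
    {k : ℕ} (hk : k ≤ N) :
    X k = (q ^ k * p ^ (N - k)) •
      ∑ r ∈ range (N + 1), ((N.choose r : 𝕜) * x ^ (N - r) * y ^ r) • X r := by
  have hsum := h.smul_add_smul_pow x y N
  rw [hxy, one_pow] at hsum
  rw [smul_sum]
  calc X k = (1 : R) • X k := (one_smul _ _).symm
    _ = _ := by
      rw [hsum, sum_smul]
      refine sum_congr rfl fun r hr => ?_
      rw [smul_comm, smul_assoc, h.pow_mul_pow_smul_comm hX hk (by simp at hr; omega)]

end Binomial

namespace Matrix

variable {ι : Type*} [Fintype ι] [DecidableEq ι]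

lemma add_smul_one_mulVec_eq_zero_iff {R : Type*} [CommRing R] (M : Matrix ι ι R) (z : R)
    (v : ι → R) :
    (M + z • 1) *ᵥ v = 0 ↔ M *ᵥ v = (-z) • v := by
  rw [add_mulVec, smul_mulVec, one_mulVec, neg_smul, eq_neg_iff_add_eq_zero]

lemma pow_mulVec_of_mulVec_eq_smul {R : Type*} [CommRing R] {M : Matrix ι ι R} {v : ι → R}
    {s : R} (h : M *ᵥ v = s • v) (k : ℕ) :
    (M ^ k) *ᵥ v = s ^ k • v := by
  induction k with
  | zero => simp
  | succ k ih => rw [pow_succ, ← mulVec_mulVec, h, mulVec_smul, ih, smul_smul, pow_succ']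

lemma add_smul_one_mulVec_eq_zero_of_mul {K : Type*} [Field K] {M P : Matrix ι ι K}
    {v : ι → K} {s a : K} (hs : s ≠ 0) (hP : P *ᵥ v = s • v) (h : (M * P + a • 1) *ᵥ v = 0) :
    (M + (a / s) • 1) *ᵥ v = 0 := by
  rw [add_smul_one_mulVec_eq_zero_iff] at h ⊢
  rw [← mulVec_mulVec, hP, mulVec_smul] at h
  rw [← inv_smul_smul₀ hs (M *ᵥ v), h, smul_smul]
  congr 1
  field_simp

end Matrix

lemma Fin.extend_val_apply {α : Type*} [Zero α] {n : ℕ} (C : Fin n → α) {i : ℕ}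
    (hi : i < n) :
    Function.extend Fin.val C 0 i = C ⟨i, hi⟩ :=
  Fin.val_injective.extend_apply C 0 ⟨i, hi⟩

lemma cS_sq_add_sS_sq (c : ℕ) (m : ℤ) : cS c m ^ 2 + sS c m ^ 2 = 1 := by
  simp only [cS, sS, ← Complex.ofReal_pow, ← Complex.ofReal_add, Real.cos_sq_add_sin_sq,
    Complex.ofReal_one]

lemma rot_ne_zero (c : ℕ) (m : ℤ) {l1 l2 : ℂ} (hl : (l1, l2) ≠ 0) :
    (sS c m * l2 + cS c m * l1, cS c m * l2 - sS c m * l1) ≠ 0 := by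
  have htrig := cS_sq_add_sS_sq c m
  intro h
  obtain ⟨hα, hβ⟩ := Prod.mk_eq_zero.mp h
  refine hl (Prod.mk_eq_zero.mpr ⟨?_, ?_⟩)
  · linear_combination cS c m * hα - sS c m * hβ - l1 * htrig
  · linear_combination sS c m * hα + cS c m * hβ - l2 * htrig

section Rotation

variable {c : ℕ} {m : ℤ}

noncomputable def rotA1 (c : ℕ) (m : ℤ) (b : Mat c) : Mat c := sS c m • 1 + cS c m • b

noncomputable def rotA2 (c : ℕ) (m : ℤ) (b : Mat c) : Mat c := cS c m • 1 - sS c m • b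

lemma Commute.rotA1_left {b b' : Mat c} (h : Commute b b') : Commute (rotA1 c m b) b' :=
  ((Commute.one_left _).smul_left _).add_left (h.smul_left _)

lemma Commute.rotA2_left {b b' : Mat c} (h : Commute b b') : Commute (rotA2 c m b) b' :=
  ((Commute.one_left _).smul_left _).sub_left (h.smul_left _)

lemma commute_rotA1_rotA2 (b : Mat c) : Commute (rotA1 c m b) (rotA2 c m b) :=
  ((Commute.refl b).rotA2_left.symm).rotA1_left

lemma smul_rotA2_add_smul_rotA1 (b : Mat c) :
    cS c m • rotA2 c m b + sS c m • rotA1 c m b = 1 := by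
  have := cS_sq_add_sS_sq c m
  unfold rotA1 rotA2
  match_scalars
  · linear_combination this
  · ring

lemma A2M_mul_rotA (g b : Mat c) : A2M c m (g * rotA1 c m b) (g * rotA2 c m b) = g := by
  have := cS_sq_add_sS_sq c m
  unfold A2M rotA1 rotA2
  simp only [mul_add, mul_sub, mul_smul_comm, mul_one]
  match_scalars
  · linear_combination this
  · ring

lemma A1M_mul_rotA (g b : Mat c) : A1M c m (g * rotA1 c m b) (g * rotA2 c m b) = g * b := by
  have := cS_sq_add_sS_sq c m
  unfold A1M rotA1 rotA2
  simp only [mul_add, mul_sub, mul_smul_comm, mul_one]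
  match_scalars
  · ring
  · linear_combination this

lemma BM_mul_rotA {g : Mat c} (hg : IsUnit g) (b : Mat c) :
    BM c m (g * rotA1 c m b) (g * rotA2 c m b) = b := by
  rw [BM, A1M_mul_rotA, A2M_mul_rotA,
    nonsing_inv_mul_cancel_left _ _ ((isUnit_iff_isUnit_det g).mp hg)]

lemma A2M_mul_BM {A1 A2 : Mat c} (hg : IsUnit (A2M c m A1 A2)) :
    A2M c m A1 A2 * BM c m A1 A2 = A1M c m A1 A2 :=
  mul_nonsing_inv_cancel_left _ _ ((isUnit_iff_isUnit_det _).mp hg)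

lemma A2M_mul_rotA1_BM {A1 A2 : Mat c} (hg : IsUnit (A2M c m A1 A2)) :
    A2M c m A1 A2 * rotA1 c m (BM c m A1 A2) = A1 := by
  have := cS_sq_add_sS_sq c m
  rw [rotA1, mul_add, mul_smul_comm, mul_smul_comm, A2M_mul_BM hg, mul_one]
  unfold A1M A2M
  match_scalars
  · linear_combination this
  · ring

lemma A2M_mul_rotA2_BM {A1 A2 : Mat c} (hg : IsUnit (A2M c m A1 A2)) :
    A2M c m A1 A2 * rotA2 c m (BM c m A1 A2) = A2 := by
  have := cS_sq_add_sS_sq c m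
  rw [rotA2, mul_sub, mul_smul_comm, mul_smul_comm, A2M_mul_BM hg, mul_one]
  unfold A1M A2M
  match_scalars
  · ring
  · linear_combination this

lemma rotA1_mulVec {b : Mat c} {v : Fin c → ℂ} {t : ℂ} (hv : b *ᵥ v = t • v) :
    rotA1 c m b *ᵥ v = (sS c m + cS c m * t) • v := by
  rw [rotA1, add_mulVec, smul_mulVec, smul_mulVec, one_mulVec, hv, smul_smul, add_smul]

lemma rotA2_mulVec {b : Mat c} {v : Fin c → ℂ} {t : ℂ} (hv : b *ᵥ v = t • v) :
    rotA2 c m b *ᵥ v = (cS c m - sS c m * t) • v := by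
  rw [rotA2, sub_mulVec, smul_mulVec, smul_mulVec, one_mulVec, hv, smul_smul, sub_smul]

end Rotation

section TupleToADHM

variable {n c : ℕ} {m : ℤ} {A1 A2 : Mat c} {C : Fin n → Mat c}

lemma DM_eq_sum_range (hn : 0 < n) (C : Fin n → Mat c) :
    DM n c m C = ∑ r ∈ range (n - 1 + 1),
      (((n - 1).choose r : ℂ) * cS c m ^ (n - 1 - r) * sS c m ^ r) •
        Function.extend Fin.val C 0 r := by
  rw [Nat.sub_add_cancel hn, ← Fin.sum_univ_eq_sum_range, DM]
  refine sum_congr rfl fun q _ => ?_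
  rw [Fin.extend_val_apply C q.isLt]

lemma CondP1.mul_mul_swap (h1 : CondP1 n c A1 A2 C) (q : Fin n) :
    A1 * C q * A2 = A2 * C q * A1 := by
  obtain ⟨q, hq⟩ := q
  by_cases hn : n = 1
  · obtain rfl : q = 0 := by omega
    exact h1.1 hn
  by_cases hqn : q + 1 < n
  · obtain ⟨hL, hR⟩ := h1.2 q hqn
    rw [hL, mul_assoc, ← hR, mul_assoc]
  · obtain ⟨k, rfl⟩ : ∃ k, q = k + 1 := ⟨q - 1, by omega⟩
    obtain ⟨hL, hR⟩ := h1.2 k hq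
    rw [mul_assoc, ← hR, ← mul_assoc, hL]

lemma CondP1.mul_extend (h1 : CondP1 n c A1 A2 C) (i : ℕ) (hi : i < n - 1) :
    A1 * Function.extend Fin.val C 0 i = A2 * Function.extend Fin.val C 0 (i + 1) := by
  rw [Fin.extend_val_apply C (by omega), Fin.extend_val_apply C (by omega)]
  exact (h1.2 i (by omega)).1

lemma CondP1.extend_mul (h1 : CondP1 n c A1 A2 C) (i : ℕ) (hi : i < n - 1) :
    Function.extend Fin.val C 0 i * A1 = Function.extend Fin.val C 0 (i + 1) * A2 := by
  rw [Fin.extend_val_apply C (by omega), Fin.extend_val_apply C (by omega)]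
  exact (h1.2 i (by omega)).2

lemma A1M_mul_mul_A2M {X : Mat c} (h : A1 * X * A2 = A2 * X * A1) :
    A1M c m A1 A2 * X * A2M c m A1 A2 = A2M c m A1 A2 * X * A1M c m A1 A2 := by
  unfold A1M A2M
  simp only [sub_mul, mul_sub, add_mul, mul_add, smul_mul_assoc, mul_smul_comm, h]
  module

lemma commute_BM_EM (h1 : CondP1 n c A1 A2 C) (hg : IsUnit (A2M c m A1 A2)) :
    Commute (BM c m A1 A2) (EM n c m A1 A2 C) := by
  have hswap : A1M c m A1 A2 * DM n c m C * A2M c m A1 A2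
      = A2M c m A1 A2 * DM n c m C * A1M c m A1 A2 := by
    simp only [DM, mul_sum, sum_mul, mul_smul_comm, smul_mul_assoc,
      A1M_mul_mul_A2M (h1.mul_mul_swap _)]
  rw [← A2M_mul_BM hg] at hswap
  refine hg.mul_left_cancel ?_
  simpa only [EM, Commute, SemiconjBy, mul_assoc] using hswap

lemma C_eq_rotA_pow_mul_DM (hn : 0 < n) (h1 : CondP1 n c A1 A2 C)
    (hg : IsUnit (A2M c m A1 A2)) (q : Fin n) :
    C q = rotA1 c m (BM c m A1 A2) ^ (q : ℕ) * rotA2 c m (BM c m A1 A2) ^ (n - 1 - q)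
      * DM n c m C := by
  have hrel : ∀ i < n - 1, rotA1 c m (BM c m A1 A2) • Function.extend Fin.val C 0 i
      = rotA2 c m (BM c m A1 A2) • Function.extend Fin.val C 0 (i + 1) := by
    intro i hi
    refine hg.mul_left_cancel ?_
    simp only [smul_eq_mul, ← mul_assoc, A2M_mul_rotA1_BM hg, A2M_mul_rotA2_BM hg]
    exact h1.mul_extend i hi
  have := (commute_rotA1_rotA2 (BM c m A1 A2)).symm.eq_pow_mul_pow_smul_sum
    (smul_rotA2_add_smul_rotA1 _) hrel (k := q) (by omega)
  rwa [Fin.extend_val_apply C q.isLt, ← DM_eq_sum_range hn, smul_eq_mul] at this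

lemma EM_mulVec (hn : 0 < n) (v : Fin c → ℂ) :
    EM n c m A1 A2 C *ᵥ v = ∑ r ∈ range (n - 1 + 1),
      (((n - 1).choose r : ℂ) * cS c m ^ (n - 1 - r) * sS c m ^ r) •
        (Function.extend Fin.val C 0 r * A2M c m A1 A2) *ᵥ v := by
  rw [EM, DM_eq_sum_range hn, ← mulVec_mulVec, sum_mulVec]
  exact sum_congr rfl fun r _ => by rw [smul_mulVec, mulVec_mulVec]

lemma C_mul_A2M_mulVec (hn : 0 < n) (h1 : CondP1 n c A1 A2 C) {v : Fin c → ℂ} {a b : ℂ}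
    (hab : cS c m • b + sS c m • a = 1) (hA1v : A1 *ᵥ v = a • A2M c m A1 A2 *ᵥ v)
    (hA2v : A2 *ᵥ v = b • A2M c m A1 A2 *ᵥ v) :
    (C ⟨0, hn⟩ * A2M c m A1 A2) *ᵥ v = b ^ (n - 1) • EM n c m A1 A2 C *ᵥ v ∧
      (C ⟨n - 1, by omega⟩ * A2M c m A1 A2) *ᵥ v = a ^ (n - 1) • EM n c m A1 A2 C *ᵥ v := by
  set y : ℕ → Fin c → ℂ := fun r => (Function.extend Fin.val C 0 r * A2M c m A1 A2) *ᵥ v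
  have hy : ∀ r < n - 1, a • y r = b • y (r + 1) := by
    intro r hr
    have := congrArg (· *ᵥ v) (h1.extend_mul r hr)
    simpa only [y, ← mulVec_mulVec, hA1v, hA2v, mulVec_smul] using this
  have hcomm := Commute.all b a
  rw [EM_mulVec hn]
  constructor
  · rw [← Fin.extend_val_apply C hn]
    simpa only [pow_zero, one_mul, Nat.sub_zero] using
      hcomm.eq_pow_mul_pow_smul_sum hab hy (Nat.zero_le _)
  · rw [← Fin.extend_val_apply C (Nat.sub_lt hn one_pos)]
    simpa only [Nat.sub_self, pow_zero, mul_one] using hcomm.eq_pow_mul_pow_smul_sum hab hy le_rfl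

lemma condT2_BM_EM (hn : 0 < n) {e : Fin c → ℂ} (h1 : CondP1 n c A1 A2 C)
    (h3 : CondP3 n c A1 A2 (C ⟨0, hn⟩) (C ⟨n - 1, by omega⟩) e)
    (hg : IsUnit (A2M c m A1 A2)) :
    CondT2 c (BM c m A1 A2) (EM n c m A1 A2 C) e := by
  intro z w v hz hw he
  rw [add_smul_one_mulVec_eq_zero_iff] at hz hw
  set g := A2M c m A1 A2
  set l1 := cS c m * z - sS c m
  set l2 := cS c m + sS c m * z
  have hgA1 : g * rotA1 c m (BM c m A1 A2) = A1 := A2M_mul_rotA1_BM hg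
  have hgA2 : g * rotA2 c m (BM c m A1 A2) = A2 := A2M_mul_rotA2_BM hg
  have hA1v : A1 *ᵥ v = (-l1) • g *ᵥ v := by
    rw [← hgA1, ← mulVec_mulVec, rotA1_mulVec hz, mulVec_smul]; congr 2; ring
  have hA2v : A2 *ᵥ v = l2 • g *ᵥ v := by
    rw [← hgA2, ← mulVec_mulVec, rotA2_mulVec hz, mulVec_smul]; congr 2; ring
  have hunit : cS c m • l2 + sS c m • (-l1) = 1 := by
    simp only [smul_eq_mul]; linear_combination cS_sq_add_sS_sq c m
  obtain ⟨hC0, hCN⟩ := C_mul_A2M_mulVec hn h1 hunit hA1v hA2v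
  refine h3 l1 l2 (l2 ^ n * w) (-(l1 ^ n * w)) ?_ (by ring) v ?_ ?_ ?_ he
  · rintro h
    simp only [Prod.mk_eq_zero] at h
    simp [h.1, h.2] at hunit
  · rw [add_mulVec, smul_mulVec, smul_mulVec, hA1v, hA2v, smul_smul, smul_smul, ← add_smul]
    simp only [mul_neg, mul_comm, neg_add_cancel, zero_smul]
  · have hpow : l2 ^ n = l2 * l2 ^ (n - 1) := by rw [← pow_succ', Nat.sub_add_cancel hn]
    rw [add_smul_one_mulVec_eq_zero_iff, ← mulVec_mulVec, hA2v, mulVec_smul, mulVec_mulVec,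
      hC0, hw, hpow]
    module
  · have hpow : l1 ^ n = l1 * l1 ^ (n - 1) := by rw [← pow_succ', Nat.sub_add_cancel hn]
    rw [add_smul_one_mulVec_eq_zero_iff, ← mulVec_mulVec, hA1v, mulVec_smul, mulVec_mulVec,
      hCN, hw, hpow, neg_pow]
    module

end TupleToADHM

noncomputable def zetaInvC (n c : ℕ) (m : ℤ) (b1 b2 g : Mat c) : Fin n → Mat c :=
  fun q => rotA1 c m b1 ^ (q : ℕ) * rotA2 c m b1 ^ (n - 1 - q) * (b2 * g⁻¹)

section ADHMToTuple

variable {n c : ℕ} {m : ℤ} {b1 b2 g : Mat c}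

lemma DM_zetaInvC (hn : 0 < n) : DM n c m (zetaInvC n c m b1 b2 g) = b2 * g⁻¹ := by
  have hbinom :=
    (commute_rotA1_rotA2 (m := m) b1).symm.smul_add_smul_pow (cS c m) (sS c m) (n - 1)
  rw [smul_rotA2_add_smul_rotA1, one_pow, Nat.sub_add_cancel hn, ← Fin.sum_univ_eq_sum_range
    (fun r => (((n - 1).choose r : ℂ) * cS c m ^ (n - 1 - r) * sS c m ^ r) •
      (rotA1 c m b1 ^ r * rotA2 c m b1 ^ (n - 1 - r)))] at hbinom
  calc DM n c m (zetaInvC n c m b1 b2 g)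
      = (∑ q : Fin n, (((n - 1).choose q : ℂ) * cS c m ^ (n - 1 - q) * sS c m ^ (q : ℕ)) •
          (rotA1 c m b1 ^ (q : ℕ) * rotA2 c m b1 ^ (n - 1 - q))) * (b2 * g⁻¹) := by
        simp only [DM, zetaInvC, sum_mul, smul_mul_assoc]
    _ = b2 * g⁻¹ := by rw [← hbinom, one_mul]

lemma condP1_zetaInvC (hT1 : Commute b1 b2) (hg : IsUnit g) :
    CondP1 n c (g * rotA1 c m b1) (g * rotA2 c m b1) (zetaInvC n c m b1 b2 g) := by
  have hgd := (isUnit_iff_isUnit_det g).mp hg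
  have hPQ := (commute_rotA1_rotA2 (m := m) b1).symm
  have hQb2 : Commute (rotA1 c m b1) b2 := hT1.rotA1_left
  have hPb2 : Commute (rotA2 c m b1) b2 := hT1.rotA2_left
  refine ⟨fun hn => ?_, fun q hq => ?_⟩
  · subst hn
    simp only [zetaInvC, Nat.sub_self, pow_zero, one_mul, mul_assoc,
      nonsing_inv_mul_cancel_left _ _ hgd]
    congr 1
    rw [← mul_assoc, hQb2.eq, mul_assoc, ← hPQ.eq, ← mul_assoc, ← hPb2.eq, mul_assoc]
  · obtain ⟨k, hk⟩ : ∃ k, n - 1 - q = k + 1 := ⟨n - 1 - (q + 1), by omega⟩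
    have hk' : n - 1 - (q + 1) = k := by omega
    simp only [zetaInvC, hk, hk']
    have hshift := hPQ.mul_pow_mul_pow_succ q k
    constructor
    · rw [mul_assoc g, mul_assoc g, ← mul_assoc (rotA1 c m b1), ← mul_assoc (rotA2 c m b1),
        hshift]
    · set Q := rotA1 c m b1
      set P := rotA2 c m b1
      simp only [mul_assoc, nonsing_inv_mul_cancel_left _ _ hgd]
      calc Q ^ q * (P ^ (k + 1) * (b2 * Q)) = Q ^ q * P ^ (k + 1) * Q * b2 := by
            rw [← hQb2.eq]; simp only [mul_assoc]
        _ = P * (Q ^ (q + 1) * P ^ k) * b2 := by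
            rw [(((Commute.refl Q).pow_left q).mul_left (hPQ.pow_left (k + 1))).eq, hshift]
        _ = Q ^ (q + 1) * (P ^ k * (b2 * P)) := by
            rw [← ((hPQ.symm.pow_left (q + 1)).mul_left ((Commute.refl P).pow_left k)).eq,
              mul_assoc _ P, hPb2.eq]
            simp only [mul_assoc]

lemma CondT2.eq_zero_of_rotA {e : Fin c → ℂ} (hT2 : CondT2 c b1 b2 e) {l1 l2 μ1 μ2 : ℂ}
    (hl : (l1, l2) ≠ 0) {v : Fin c → ℂ}
    (hv1 : (l2 • rotA1 c m b1 + l1 • rotA2 c m b1) *ᵥ v = 0)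
    (hv2 : (b2 * rotA2 c m b1 ^ n + μ1 • 1) *ᵥ v = 0)
    (hv3 : (b2 * rotA1 c m b1 ^ n + μ2 • 1) *ᵥ v = 0) (he : e ⬝ᵥ v = 0) : v = 0 := by
  have htrig := cS_sq_add_sS_sq c m
  obtain ⟨α, hα⟩ : ∃ α, α = sS c m * l2 + cS c m * l1 := ⟨_, rfl⟩
  obtain ⟨β, hβ⟩ : ∃ β, β = cS c m * l2 - sS c m * l1 := ⟨_, rfl⟩
  have hv : (α • 1 + β • b1) *ᵥ v = 0 := by
    rw [← hv1]
    congr 1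
    simp only [rotA1, rotA2, hα, hβ]
    module
  rw [add_mulVec, smul_mulVec, smul_mulVec, one_mulVec] at hv
  by_cases hβ0 : β = 0
  · have hα0 : α ≠ 0 := fun hα0 => rot_ne_zero c m hl (by rw [← hα, ← hβ, hα0, hβ0]; rfl)
    rw [hβ0, zero_smul, add_zero] at hv
    exact (smul_eq_zero.mp hv).resolve_left hα0
  have hb1 : b1 *ᵥ v = (-(α / β)) • v := by
    rw [← inv_smul_smul₀ hβ0 (b1 *ᵥ v), eq_neg_of_add_eq_zero_right hv, smul_neg, smul_smul,
      neg_smul, div_eq_inv_mul]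
  have hPv : rotA2 c m b1 *ᵥ v = (l2 / β) • v := by
    rw [rotA2_mulVec hb1]
    congr 1
    field_simp
    rw [hα, hβ]
    linear_combination l2 * htrig
  have hQv : rotA1 c m b1 *ᵥ v = (-l1 / β) • v := by
    rw [rotA1_mulVec hb1]
    congr 1
    field_simp
    rw [hα, hβ]
    linear_combination -l1 * htrig
  obtain ⟨w, hw⟩ : ∃ w : ℂ, (b2 + w • 1) *ᵥ v = 0 := by
    rcases eq_or_ne l2 0 with hl2 | hl2
    · have hl1 : l1 ≠ 0 := fun h => hl (by simp [h, hl2])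
      exact ⟨_, add_smul_one_mulVec_eq_zero_of_mul
        (pow_ne_zero n (div_ne_zero (neg_ne_zero.mpr hl1) hβ0))
        (pow_mulVec_of_mulVec_eq_smul hQv n) hv3⟩
    · exact ⟨_, add_smul_one_mulVec_eq_zero_of_mul (pow_ne_zero n (div_ne_zero hl2 hβ0))
        (pow_mulVec_of_mulVec_eq_smul hPv n) hv2⟩
  exact hT2 (α / β) w v ((add_smul_one_mulVec_eq_zero_iff _ _ _).mpr hb1) hw he

lemma zetaInvC_zero_mul (hn : 0 < n) (hT1 : Commute b1 b2) (hg : IsUnit g) :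
    zetaInvC n c m b1 b2 g ⟨0, hn⟩ * (g * rotA2 c m b1) = b2 * rotA2 c m b1 ^ n := by
  have hgd := (isUnit_iff_isUnit_det g).mp hg
  simp only [zetaInvC, mul_assoc, nonsing_inv_mul_cancel_left _ _ hgd, pow_zero, one_mul,
    Nat.sub_zero]
  rw [← mul_assoc, (hT1.rotA2_left.pow_left _).eq, mul_assoc, ← pow_succ, Nat.sub_add_cancel hn]

lemma zetaInvC_last_mul (hn : 0 < n) (hT1 : Commute b1 b2) (hg : IsUnit g) :
    zetaInvC n c m b1 b2 g ⟨n - 1, by omega⟩ * (g * rotA1 c m b1) = b2 * rotA1 c m b1 ^ n := by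
  have hgd := (isUnit_iff_isUnit_det g).mp hg
  simp only [zetaInvC, mul_assoc, nonsing_inv_mul_cancel_left _ _ hgd, Nat.sub_self, pow_zero,
    mul_one]
  rw [← mul_assoc, (hT1.rotA1_left.pow_left _).eq, mul_assoc, ← pow_succ, Nat.sub_add_cancel hn]

lemma condP3_zetaInvC (hn : 0 < n) {e : Fin c → ℂ} (hT1 : Commute b1 b2)
    (hT2 : CondT2 c b1 b2 e) (hg : IsUnit g) :
    CondP3 n c (g * rotA1 c m b1) (g * rotA2 c m b1) (zetaInvC n c m b1 b2 g ⟨0, hn⟩)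
      (zetaInvC n c m b1 b2 g ⟨n - 1, by omega⟩) e := by
  intro l1 l2 μ1 μ2 hl _ v hv1 hv2 hv3 he
  rw [zetaInvC_zero_mul hn hT1 hg] at hv2
  rw [zetaInvC_last_mul hn hT1 hg] at hv3
  refine hT2.eq_zero_of_rotA hl ?_ hv2 hv3 he
  refine mulVec_injective_of_isUnit hg ?_
  rw [mulVec_mulVec, mulVec_zero, ← hv1, mul_add, mul_smul_comm, mul_smul_comm]

noncomputable def zetaInv (n c : ℕ) (m : ℤ) (x : (Mat c × Mat c × (Fin c → ℂ)) × Mat c) :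
    Mat c × Mat c × (Fin n → Mat c) × (Fin c → ℂ) :=
  (x.2 * rotA1 c m x.1.1, x.2 * rotA2 c m x.1.1, zetaInvC n c m x.1.1 x.1.2.1 x.2, x.1.2.2)

lemma zetaInv_BM_EM (hn : 0 < n) {A1 A2 : Mat c} {C : Fin n → Mat c} {e : Fin c → ℂ}
    (h1 : CondP1 n c A1 A2 C) (hg : IsUnit (A2M c m A1 A2)) :
    zetaInv n c m ((BM c m A1 A2, EM n c m A1 A2 C, e), A2M c m A1 A2) = (A1, A2, C, e) := by
  refine Prod.ext (A2M_mul_rotA1_BM hg) (Prod.ext (A2M_mul_rotA2_BM hg) (Prod.ext ?_ rfl))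
  funext q
  change zetaInvC n c m _ _ _ q = C q
  rw [C_eq_rotA_pow_mul_DM hn h1 hg q, zetaInvC, EM,
    mul_nonsing_inv_cancel_right _ _ ((isUnit_iff_isUnit_det _).mp hg)]

lemma EM_zetaInvC (hn : 0 < n) (hg : IsUnit g) :
    EM n c m (g * rotA1 c m b1) (g * rotA2 c m b1) (zetaInvC n c m b1 b2 g) = b2 := by
  rw [EM, DM_zetaInvC hn, A2M_mul_rotA,
    nonsing_inv_mul_cancel_right _ _ ((isUnit_iff_isUnit_det g).mp hg)]

lemma condP2_mul_rotA (hg : IsUnit g) (b : Mat c) :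
    CondP2 c (g * rotA1 c m b) (g * rotA2 c m b) := by
  refine ⟨(sS c m, cS c m), fun h => ?_, ?_⟩
  · have htrig := cS_sq_add_sS_sq c m
    simp_all [Prod.mk_eq_zero]
  · change (A2M c m _ _).det ≠ 0
    rw [A2M_mul_rotA]
    exact ((isUnit_iff_isUnit_det g).mp hg).ne_zero

end ADHMToTuple

theorem stmt0_general (n c : ℕ) (hn : 0 < n) (m : ℕ) :
    Set.BijOn
      (fun t : Mat c × Mat c × (Fin n → Mat c) × (Fin c → ℂ) =>
        ((BM c m t.1 t.2.1, EM n c m t.1 t.2.1 t.2.2.1, t.2.2.2), A2M c m t.1 t.2.1))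
      {t : Mat c × Mat c × (Fin n → Mat c) × (Fin c → ℂ) |
        CondP n c hn t.1 t.2.1 t.2.2.1 t.2.2.2 ∧ IsUnit (A2M c m t.1 t.2.1)}
      {x : (Mat c × Mat c × (Fin c → ℂ)) × Mat c |
        ADHM c x.1.1 x.1.2.1 x.1.2.2 ∧ IsUnit x.2} := by
  refine Set.InvOn.bijOn (f' := zetaInv n c m) ⟨?_, ?_⟩ ?_ ?_
  · rintro ⟨A1, A2, C, e⟩ ⟨⟨h1, -, -⟩, hg⟩
    exact zetaInv_BM_EM hn h1 hg
  · rintro ⟨⟨b1, b2, e⟩, g⟩ ⟨-, hg⟩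
    simp only [zetaInv, BM_mul_rotA hg, EM_zetaInvC hn hg, A2M_mul_rotA]
  · rintro ⟨A1, A2, C, e⟩ ⟨⟨h1, -, h3⟩, hg⟩
    exact ⟨⟨commute_BM_EM h1 hg, condT2_BM_EM hn h1 h3 hg⟩, hg⟩
  · rintro ⟨⟨b1, b2, e⟩, g⟩ ⟨⟨hT1, hT2⟩, hg⟩
    refine ⟨⟨condP1_zetaInvC hT1 hg, condP2_mul_rotA hg b1, condP3_zetaInvC hn hT1 hT2 hg⟩,
      ?_⟩
    simpa only [zetaInv, A2M_mul_rotA] using hg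

/-- the map ζ_m is well defined on P^n(c)_m (its values satisfy (T1), (T2)
and the GL factor is invertible) and is a bijection onto T(c) × GL(c, ℂ). -/
theorem stmt0 (n c : ℕ) (hn : 0 < n) (hc : 0 < c) (m : ℕ) (hm : m ≤ c) :
    Set.BijOn
      (fun t : Mat c × Mat c × (Fin n → Mat c) × (Fin c → ℂ) =>
        ((BM c m t.1 t.2.1, EM n c m t.1 t.2.1 t.2.2.1, t.2.2.2), A2M c m t.1 t.2.1))
      {t : Mat c × Mat c × (Fin n → Mat c) × (Fin c → ℂ) |
        CondP n c hn t.1 t.2.1 t.2.2.1 t.2.2.2 ∧ IsUnit (A2M c m t.1 t.2.1)}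
      {x : (Mat c × Mat c × (Fin c → ℂ)) × Mat c |
        ADHM c x.1.1 x.1.2.1 x.1.2.2 ∧ IsUnit x.2} :=
  stmt0_general n c hn m
end

section
/- Fix integers n ≥ 1, c ≥ 1 and m ∈ {0, …, c}. If the tuple (A₁, A₂; C₁, …, C_n; e) satisfies condition (P1) and A_{2m} is invertible, then the matrices B_m and E_m commute: B_m E_m = E_m B_m. -/
open Matrix

/-!
By (P1), every `C_q` satisfies `A₁ C_q A₂ = A₂ C_q A₁` (shift `C_q` along the chain of relations
to one side and back). This condition is linear in the middle factor, so `D_m` satisfies it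
too, and it survives replacing `(A₁, A₂)` by any pair of linear combinations, in particular by
`(A_{1m}, A_{2m})`. Then `A_{2m}⁻¹ A_{1m} D_m A_{2m} = D_m A_{1m} = D_m A_{2m} A_{2m}⁻¹ A_{1m}`.
-/

section TwistedCommutant

variable {R M : Type*} [CommRing R] [Ring M] [Algebra R M]

def twistedCommutant (A B : M) : Submodule R M where
  carrier := {D | A * D * B = B * D * A}
  add_mem' {D D'} hD hD' := by
    simp only [Set.mem_ofPred_eq, mul_add, add_mul] at *
    rw [hD, hD']
  zero_mem' := by simp
  smul_mem' r D hD := by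
    simp only [Set.mem_ofPred_eq, mul_smul_comm, smul_mul_assoc] at *
    rw [hD]

theorem mem_twistedCommutant {A B D : M} :
    D ∈ twistedCommutant (R := R) A B ↔ A * D * B = B * D * A :=
  Iff.rfl

/-- Expanding, the two sides differ by `(a * y - b * x) • (A * D * B - B * D * A)`. -/
theorem linearCombination_mul_mul_comm {A B D : M} (h : A * D * B = B * D * A) (a b x y : R) :
    (a • A + b • B) * D * (x • A + y • B) = (x • A + y • B) * D * (a • A + b • B) := by
  simp only [add_mul, mul_add, smul_mul_assoc, mul_smul_comm, h]
  module

end TwistedCommutant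

theorem Matrix.commute_nonsing_inv_mul_of_mul_mul_comm {ι R : Type*} [Fintype ι] [DecidableEq ι]
    [CommRing R] {X Y D : Matrix ι ι R} (hX : IsUnit X) (h : Y * D * X = X * D * Y) :
    Commute (X⁻¹ * Y) (D * X) := by
  have hdet := (isUnit_iff_isUnit_det X).mp hX
  calc X⁻¹ * Y * (D * X) = X⁻¹ * (X * (D * Y)) := by rw [← Matrix.mul_assoc X, ← h]; simp only [Matrix.mul_assoc]
    _ = D * (X * (X⁻¹ * Y)) := by
      rw [nonsing_inv_mul_cancel_left _ _ hdet, mul_nonsing_inv_cancel_left _ _ hdet]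
    _ = D * X * (X⁻¹ * Y) := (Matrix.mul_assoc _ _ _).symm

theorem CondP1.mul_mul_comm {n c : ℕ} {A1 A2 : Mat c} {C : Fin n → Mat c}
    (hP1 : CondP1 n c A1 A2 C) (q : Fin n) : A1 * C q * A2 = A2 * C q * A1 := by
  obtain ⟨hn1, hstep⟩ := hP1
  obtain ⟨q, hq⟩ := q
  by_cases hlast : q + 1 < n
  · obtain ⟨hleft, hright⟩ := hstep q hlast
    rw [hleft, Matrix.mul_assoc, ← hright, ← Matrix.mul_assoc]
  · rcases q with _ | p
    · exact hn1 (by omega)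
    · obtain ⟨hleft, hright⟩ := hstep p hq
      rw [Matrix.mul_assoc, ← hright, ← Matrix.mul_assoc, hleft]

theorem DM_mem_twistedCommutant {n c : ℕ} {A1 A2 : Mat c} {C : Fin n → Mat c}
    (hP1 : CondP1 n c A1 A2 C) (m : ℤ) : DM n c m C ∈ twistedCommutant (R := ℂ) A1 A2 :=
  Submodule.sum_mem _ fun q _ => Submodule.smul_mem _ _ (hP1.mul_mul_comm q)

theorem stmt3_general (n c : ℕ) (m : ℕ)
    (A1 A2 : Mat c) (C : Fin n → Mat c)
    (hP1 : CondP1 n c A1 A2 C) (hinv : IsUnit (A2M c m A1 A2)) :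
    BM c m A1 A2 * EM n c m A1 A2 C = EM n c m A1 A2 C * BM c m A1 A2 := by
  have hD : A1 * DM n c m C * A2 = A2 * DM n c m C * A1 :=
    mem_twistedCommutant.mp (DM_mem_twistedCommutant hP1 m)
  have hrot : A1M c m A1 A2 * DM n c m C * A2M c m A1 A2 =
      A2M c m A1 A2 * DM n c m C * A1M c m A1 A2 := by
    simpa only [A1M, A2M, sub_eq_add_neg, ← neg_smul] using
      linearCombination_mul_mul_comm hD (cS c m) (-sS c m) (sS c m) (cS c m)
  exact Matrix.commute_nonsing_inv_mul_of_mul_mul_comm hinv hrot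

/-- under (P1) and invertibility of A_{2m}, B_m and E_m commute. -/
theorem stmt3 (n c : ℕ) (hn : 0 < n) (hc : 0 < c) (m : ℕ) (hm : m ≤ c)
    (A1 A2 : Mat c) (C : Fin n → Mat c)
    (hP1 : CondP1 n c A1 A2 C) (hinv : IsUnit (A2M c m A1 A2)) :
    BM c m A1 A2 * EM n c m A1 A2 C = EM n c m A1 A2 C * BM c m A1 A2 :=
  stmt3_general n c m A1 A2 C hP1 hinv
end

section
/- Fix integers n > 1 and c ≥ 1, and let A₁, A₂ ∈ M_c(ℂ) satisfy condition (P2). Then the ℂ-linear map M_c(ℂ)^n → M_c(ℂ)^{n−1} sending (C₁, …, C_n) to (A₁C₁ − A₂C₂, A₁C₂ − A₂C₃, …, A₁C_{n−1} − A₂C_n) is surjective (i.e. has rank (n−1)c²), and its kernel has dimension c² as a ℂ-vector space. -/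
/-!
(P2) says the pencil `det (A₁ - x A₂)` is a nonzero polynomial in `x`, so there are `n - 1`
distinct points `x` with `A₁ - x A₂` invertible. For such `x`, the sequence
`Cᵣ = xʳ (A₁ - x A₂)⁻¹ E` is mapped to the geometric sequence `(x^q E)_q`, and since the
Vandermonde matrix of distinct points is invertible, these sequences span the target.
The kernel dimension then follows from rank–nullity: `n c² - (n - 1) c² = c²`.
-/

open Matrix

/-- The ℂ-linear map M_c(ℂ)^n → M_c(ℂ)^{n−1},
(C₁, …, C_n) ↦ (A₁C₁ − A₂C₂, …, A₁C_{n−1} − A₂C_n). -/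
noncomputable def Lmap (n c : ℕ) (A1 A2 : Mat c) :
    (Fin n → Mat c) →ₗ[ℂ] (Fin (n - 1) → Mat c) where
  toFun C := fun q =>
    A1 * C ⟨q.val, by have := q.isLt; omega⟩ -
      A2 * C ⟨q.val + 1, by have := q.isLt; omega⟩
  map_add' C C' := by
    funext q
    simp only [Pi.add_apply, mul_add]
    abel
  map_smul' a C := by
    funext q
    simp only [Pi.smul_apply, Matrix.mul_smul, smul_sub, RingHom.id_apply]

open Polynomial

theorem exists_injective_forall_eval_ne_zero {R : Type*} [CommRing R] [IsDomain R] [Infinite R]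
    {p : R[X]} (hp : p ≠ 0) (k : ℕ) :
    ∃ v : Fin k → R, Function.Injective v ∧ ∀ i, p.eval (v i) ≠ 0 := by
  let f := (p.finite_setOfPred_isRoot hp).infinite_compl.natEmbedding
  exact ⟨fun i => f i, fun i j h => Fin.val_injective (f.injective (Subtype.ext h)),
    fun i => (f i).2⟩

section Pencil

variable {ι K : Type*} [Fintype ι] [DecidableEq ι] [Field K]

theorem eval_det_X_smul_add (A B : Matrix ι ι K) (x : K) :
    (det ((X : K[X]) • B.map C + A.map C)).eval x = det (x • B + A) := by
  rw [← coe_evalRingHom, RingHom.map_det]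
  congr 1
  ext i j
  simp [mul_comm _ x]

theorem det_X_smul_add_ne_zero {A B : Matrix ι ι K} {a b : K} (hab : (a, b) ≠ 0)
    (h : det (a • A + b • B) ≠ 0) : det ((X : K[X]) • B.map C + A.map C) ≠ 0 := by
  -- For `a = 0` the leading coefficient `det B` is nonzero; otherwise evaluate at `b / a`.
  rcases eq_or_ne a 0 with rfl | ha
  · have hB : det B ≠ 0 := by
      simpa [det_smul, (show b ≠ 0 by simpa using hab)] using h
    intro h0
    exact hB (by simpa [h0] using (coeff_det_X_add_C_card B A).symm)
  · intro h0
    have hpt : (b / a) • B + A = a⁻¹ • (a • A + b • B) := by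
      rw [smul_add, smul_smul, smul_smul, inv_mul_cancel₀ ha, one_smul, div_eq_inv_mul, add_comm]
    have h_eval := eval_det_X_smul_add A B (b / a)
    rw [h0, eval_zero, hpt, det_smul] at h_eval
    exact h ((mul_eq_zero.mp h_eval.symm).resolve_left (by simp [ha]))

theorem exists_injective_forall_det_sub_smul_ne_zero [Infinite K] {A B : Matrix ι ι K} {a b : K}
    (hab : (a, b) ≠ 0) (h : det (a • A + b • B) ≠ 0) (k : ℕ) :
    ∃ v : Fin k → K, Function.Injective v ∧ ∀ i, det (A - v i • B) ≠ 0 := by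
  have hab' : (a, -b) ≠ 0 := by simpa using hab
  obtain ⟨v, hv, hdet⟩ := exists_injective_forall_eval_ne_zero
    (det_X_smul_add_ne_zero (B := -B) hab' (by simpa using h)) k
  refine ⟨v, hv, fun i => ?_⟩
  simpa only [eval_det_X_smul_add, smul_neg, neg_add_eq_sub] using hdet i

end Pencil

theorem exists_forall_sum_smul_eq {R M ι : Type*} [CommRing R] [AddCommMonoid M] [Module R M]
    [Fintype ι] [DecidableEq ι] {V : Matrix ι ι R} (hV : IsUnit V.det) (B : ι → M) :
    ∃ E : ι → M, ∀ q, ∑ i, V i q • E i = B q := by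
  refine ⟨fun i => ∑ j, V⁻¹ j i • B j, fun q => ?_⟩
  calc ∑ i, V i q • ∑ j, V⁻¹ j i • B j = ∑ j, (V⁻¹ * V) j q • B j := by
        simp only [Finset.smul_sum, smul_smul, mul_apply, Finset.sum_smul]
        rw [Finset.sum_comm]
        simp only [mul_comm]
    _ = B q := by simp [nonsing_inv_mul V hV, one_apply]

theorem Lmap_pow_smul {n c : ℕ} {A1 A2 : Mat c} {x : ℂ} (hx : det (A1 - x • A2) ≠ 0)
    (E : Mat c) :
    Lmap n c A1 A2 (fun r => x ^ (r : ℕ) • ((A1 - x • A2)⁻¹ * E)) =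
      fun q : Fin (n - 1) => x ^ (q : ℕ) • E := by
  funext q
  show A1 * (x ^ (q : ℕ) • _) - A2 * (x ^ ((q : ℕ) + 1) • _) = _
  calc _ = x ^ (q : ℕ) • ((A1 - x • A2) * ((A1 - x • A2)⁻¹ * E)) := by
        rw [Matrix.mul_smul, Matrix.mul_smul, Matrix.sub_mul, Matrix.smul_mul, pow_succ]
        module
    _ = x ^ (q : ℕ) • E := by
        rw [← mul_assoc, mul_nonsing_inv _ (isUnit_iff_ne_zero.mpr hx), one_mul]

theorem Lmap_surjective {n c : ℕ} {A1 A2 : Mat c} (hP2 : CondP2 c A1 A2) :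
    Function.Surjective (Lmap n c A1 A2) := by
  obtain ⟨⟨a, b⟩, hab, h⟩ := hP2
  obtain ⟨v, hv, hdet⟩ := exists_injective_forall_det_sub_smul_ne_zero hab h (n - 1)
  intro B
  obtain ⟨E, hE⟩ := exists_forall_sum_smul_eq
    (isUnit_iff_ne_zero.mpr (det_vandermonde_ne_zero_iff.mpr hv)) B
  refine ⟨∑ i, fun r => v i ^ (r : ℕ) • ((A1 - v i • A2)⁻¹ * E i), ?_⟩
  rw [map_sum]
  simp_rw [Lmap_pow_smul (hdet _)]
  funext q
  simpa [vandermonde_apply] using hE q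

theorem finrank_fin_fun_mat (k c : ℕ) : Module.finrank ℂ (Fin k → Mat c) = k * c ^ 2 := by
  simp [Module.finrank_pi_fintype, Module.finrank_matrix, sq]

theorem finrank_ker_Lmap {n c : ℕ} (hn : 1 ≤ n) {A1 A2 : Mat c}
    (hsurj : Function.Surjective (Lmap n c A1 A2)) :
    Module.finrank ℂ (LinearMap.ker (Lmap n c A1 A2)) = c ^ 2 := by
  have hrank := (Lmap n c A1 A2).finrank_range_add_finrank_ker
  rw [LinearMap.range_eq_top.mpr hsurj, finrank_top, finrank_fin_fun_mat, finrank_fin_fun_mat,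
    Nat.sub_one_mul] at hrank
  have : c ^ 2 ≤ n * c ^ 2 := Nat.le_mul_of_pos_left _ hn
  omega

theorem stmt6_general (n c : ℕ) (hn : 1 < n) (A1 A2 : Mat c)
    (hP2 : CondP2 c A1 A2) :
    Function.Surjective (Lmap n c A1 A2) ∧
    Module.finrank ℂ (LinearMap.ker (Lmap n c A1 A2)) = c ^ 2 :=
  ⟨Lmap_surjective hP2, finrank_ker_Lmap hn.le (Lmap_surjective hP2)⟩

/-- if (A₁, A₂) satisfies (P2) then the map (C₁,…,C_n) ↦
(A₁C₁ − A₂C₂, …, A₁C_{n−1} − A₂C_n) is surjective and its kernel has dimension c². -/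
theorem stmt6 (n c : ℕ) (hn : 1 < n) (hc : 0 < c) (A1 A2 : Mat c)
    (hP2 : CondP2 c A1 A2) :
    Function.Surjective (Lmap n c A1 A2) ∧
    Module.finrank ℂ (LinearMap.ker (Lmap n c A1 A2)) = c ^ 2 :=
  stmt6_general n c hn A1 A2 hP2
end

section
/- Fix an integer c ≥ 1 and let A₁, A₂ ∈ M_c(ℂ) satisfy condition (P2). Then there exists m ∈ {0, …, c} such that A_{2m} = s_m A₁ + c_m A₂ is invertible, where c_m = cos(πm/(c+1)) and s_m = sin(πm/(c+1)). -/
open Matrix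

/-!
If every `A2M c m A1 A2 = sin θₘ • A1 + cos θₘ • A2`, `θₘ = π m / (c + 1)`, `0 ≤ m ≤ c`,
were singular, then `m = 0` makes `A2` singular, so `z ↦ det (z • A2 + A1)` is a polynomial
of degree `< c`; for `1 ≤ m ≤ c` it vanishes at the `c` distinct points `cot θₘ`, hence
identically. Homogeneity then makes every `det (ν₁ • A1 + ν₂ • A2)` vanish, contradicting (P2).
-/

open Polynomial Finset Set

namespace Matrix

variable {n : Type*} [Fintype n] [DecidableEq n]

theorem eval_det_X_smul_add {R : Type*} [CommRing R] (A B : Matrix n n R) (z : R) :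
    (det ((X : R[X]) • A.map C + B.map C)).eval z = det (z • A + B) := by
  rw [← coe_evalRingHom, RingHom.map_det]
  congr 1
  ext i j
  simp only [RingHom.mapMatrix_apply, map_apply, add_apply, smul_apply, smul_eq_mul,
    coe_evalRingHom, eval_add, eval_mul, eval_X, eval_C]

variable {K : Type*} [Field K]

theorem det_X_smul_add_eq_zero_of_card_le {A B : Matrix n n K} (hA : det A = 0) (s : Finset K)
    (hs : Fintype.card n ≤ #s) (h : ∀ z ∈ s, det (z • A + B) = 0) :
    det ((X : K[X]) • A.map C + B.map C) = 0 := by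
  have hn : 0 < Fintype.card n := by
    by_contra! hn
    have : IsEmpty n := Fintype.card_eq_zero_iff.mp (Nat.le_zero.mp hn)
    exact one_ne_zero (det_isEmpty (A := A) ▸ hA)
  refine eq_zero_of_natDegree_lt_card_of_eval_eq_zero' _ s
    (fun z hz => (eval_det_X_smul_add A B z).trans (h z hz)) ?_
  have := natDegree_le_pred (natDegree_det_X_add_C_le A B)
    ((coeff_det_X_add_C_card A B).trans hA)
  omega

theorem det_smul_add_smul_eq_zero_of_card_le {A B : Matrix n n K} (hA : det A = 0)
    (s : Finset K) (hs : Fintype.card n ≤ #s) (h : ∀ z ∈ s, det (z • A + B) = 0) (x y : K) :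
    det (x • B + y • A) = 0 := by
  rcases eq_or_ne x 0 with rfl | hx
  · simp [hA]
  · have hpencil : x • B + y • A = x • ((y / x) • A + B) := by
      rw [smul_add, smul_smul, mul_div_cancel₀ _ hx, add_comm]
    rw [hpencil, det_smul, ← eval_det_X_smul_add, det_X_smul_add_eq_zero_of_card_le hA s hs h,
      eval_zero, mul_zero]

end Matrix

theorem Real.injOn_cos_div_sin : InjOn (fun x => Real.cos x / Real.sin x) (Ioo 0 Real.pi) := by
  intro x hx y hy hxy
  have hsx := (Real.sin_pos_of_pos_of_lt_pi hx.1 hx.2).ne'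
  have hsy := (Real.sin_pos_of_pos_of_lt_pi hy.1 hy.2).ne'
  have hsin : Real.sin (y - x) = 0 := by
    rw [Real.sin_sub]
    field_simp at hxy
    linarith
  have := (Real.sin_eq_zero_iff_of_lt_of_lt (by linarith [hx.2, hy.1])
    (by linarith [hx.1, hy.2])).mp hsin
  linarith

theorem pi_mul_div_mem_Ioo {m N : ℝ} (hm : 0 < m) (hmN : m < N) :
    Real.pi * m / N ∈ Ioo 0 Real.pi := by
  have hN : 0 < N := hm.trans hmN
  refine ⟨by positivity, ?_⟩
  rw [div_lt_iff₀ hN]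
  nlinarith [Real.pi_pos]

theorem pi_mul_natCast_div_succ_mem_Ioo {c m : ℕ} (h1 : 1 ≤ m) (h2 : m ≤ c) :
    Real.pi * ((m : ℤ) : ℝ) / ((c : ℝ) + 1) ∈ Ioo 0 Real.pi := by
  push_cast
  exact pi_mul_div_mem_Ioo (by exact_mod_cast h1) (by exact_mod_cast Nat.lt_succ_of_le h2)

theorem sS_ne_zero {c m : ℕ} (h1 : 1 ≤ m) (h2 : m ≤ c) : sS c m ≠ 0 := by
  have h := pi_mul_natCast_div_succ_mem_Ioo h1 h2
  exact Complex.ofReal_ne_zero.mpr (Real.sin_pos_of_pos_of_lt_pi h.1 h.2).ne'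

theorem injOn_cS_div_sS (c : ℕ) :
    InjOn (fun m : ℕ => cS c m / sS c m) (Finset.Icc 1 c : Finset ℕ) := by
  intro a ha b hb hab
  simp only [coe_Icc, Set.mem_Icc] at ha hb
  simp only [cS, sS, ← Complex.ofReal_div, Complex.ofReal_inj] at hab
  have h := Real.injOn_cos_div_sin (pi_mul_natCast_div_succ_mem_Ioo ha.1 ha.2)
    (pi_mul_natCast_div_succ_mem_Ioo hb.1 hb.2) hab
  have hN : (c : ℝ) + 1 ≠ 0 := by positivity
  field_simp at h
  exact_mod_cast h

theorem A2M_zero (c : ℕ) (A1 A2 : Mat c) : A2M c 0 A1 A2 = A2 := by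
  simp [A2M, cS, sS]

theorem A2M_eq_smul {c : ℕ} {m : ℤ} (A1 A2 : Mat c) (hs : sS c m ≠ 0) :
    A2M c m A1 A2 = sS c m • ((cS c m / sS c m) • A2 + A1) := by
  rw [A2M, smul_add, smul_smul, mul_div_cancel₀ _ hs, add_comm]

theorem stmt13_general (c : ℕ) (A1 A2 : Mat c) (hP2 : CondP2 c A1 A2) :
    ∃ m : ℕ, m ≤ c ∧ IsUnit (A2M c m A1 A2) := by
  by_contra! hsing
  have hdet : ∀ m ≤ c, (A2M c m A1 A2).det = 0 := fun m hm => by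
    simpa [isUnit_iff_isUnit_det] using hsing m hm
  have hA2 : A2.det = 0 := A2M_zero c A1 A2 ▸ hdet 0 c.zero_le
  have hroots : ∀ z ∈ (Finset.Icc 1 c).image (fun m : ℕ => cS c m / sS c m),
      (z • A2 + A1).det = 0 := by
    simp only [Finset.mem_image, Finset.mem_Icc]
    rintro _ ⟨m, ⟨h1, h2⟩, rfl⟩
    have h := hdet m h2
    rw [A2M_eq_smul A1 A2 (sS_ne_zero h1 h2), det_smul] at h
    exact (mul_eq_zero.mp h).resolve_left (pow_ne_zero _ (sS_ne_zero h1 h2))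
  have hcard :
      Fintype.card (Fin c) ≤ #((Finset.Icc 1 c).image fun m : ℕ => cS c m / sS c m) := by
    rw [card_image_of_injOn (injOn_cS_div_sS c)]
    simp
  obtain ⟨ν, -, hν⟩ := hP2
  exact hν (det_smul_add_smul_eq_zero_of_card_le hA2 _ hcard hroots ν.1 ν.2)

/-- if (A₁, A₂) satisfies (P2), there exists m ∈ {0,…,c} with
A_{2m} = s_m A₁ + c_m A₂ invertible. -/
theorem stmt13 (c : ℕ) (hc : 0 < c) (A1 A2 : Mat c) (hP2 : CondP2 c A1 A2) :
    ∃ m : ℕ, m ≤ c ∧ IsUnit (A2M c m A1 A2) :=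
  stmt13_general c A1 A2 hP2
end
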